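/- Let G and H be finitely generated groups. The direct product G × H has property FW if and only if both G and H have property FW. -/

import Mathlib

open scoped Classical in
/-- The number of ends of a graph: the supremum over finite vertex sets `K` of the
number of infinite connected components of the induced subgraph on the complement of `K`. -/
noncomputable def numEnds {V : Type*} (Γ : SimpleGraph V) : ℕ∞ :=
  ⨆ K : Finset V,
    {C : (SimpleGraph.induce ((↑K : Set V)ᶜ) Γ).ConnectedComponent | C.supp.Infinite}.encard

/-- The orbital graph of an action of `G` on `X` with respect to `S ⊆ G`:
vertices `X`, an edge between `x` and `s • x` for each `s ∈ S`. -/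
def orbitalGraph (G : Type*) [Group G] (S : Set G) (X : Type*) [MulAction G X] :
    SimpleGraph X where
  Adj x y := x ≠ y ∧ ∃ s ∈ S, (s • x = y ∨ s • y = x)
  symm := by
    refine ⟨?_⟩
    rintro x y ⟨h, s, hs, h'⟩
    exact ⟨h.symm, s, hs, h'.symm⟩
  loopless := by refine ⟨?_⟩; rintro x ⟨h, -⟩; exact h rfl

/-- The Schreier graph `Sch(G, H; S)`: vertices the left cosets `G ⧸ H`,
an edge between `gH` and `sgH` for each `s ∈ S`. -/
def schreierGraph (G : Type*) [Group G] (S : Set G) (H : Subgroup G) :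
    SimpleGraph (G ⧸ H) where
  Adj x y := x ≠ y ∧ ∃ s ∈ S, ∃ g : G,
      (((g : G ⧸ H) = x ∧ ((s * g : G) : G ⧸ H) = y)) ∨
      (((g : G ⧸ H) = y ∧ ((s * g : G) : G ⧸ H) = x))
  symm := by
    refine ⟨?_⟩
    rintro x y ⟨h, s, hs, g, hg⟩
    exact ⟨h.symm, s, hs, g, hg.symm⟩
  loopless := by refine ⟨?_⟩; rintro x ⟨h, -⟩; exact h rfl

/-- The Cayley graph of `G` with respect to `S`. -/
def cayleyGraph (G : Type*) [Group G] (S : Set G) : SimpleGraph G :=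
  orbitalGraph G S G

/-- `S` is a finite symmetric generating set of `G`. -/
def IsSymmGen {G : Type*} [Group G] (S : Finset G) : Prop :=
  (∀ s ∈ S, s⁻¹ ∈ S) ∧ Subgroup.closure (S : Set G) = ⊤

/-- A group has property FW if all of its Schreier graphs with respect to a finite
symmetric generating set have at most one end. -/
def HasFW (G : Type*) [Group G] : Prop :=
  ∀ S : Finset G, IsSymmGen S → ∀ L : Subgroup G, numEnds (schreierGraph G (↑S) L) ≤ 1

/-! A finitely generated group has FW iff it transfixes every commensurated subset of every
`G`-set (Cornulier): if `g • M ∆ M` is finite for all `g`, then `M` is at finite symmetric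
difference from a `G`-invariant set. On a coset space `G ⧸ L` a subset is commensurated exactly
when its vertex boundary in the Schreier graph is finite, and the Schreier graph has at most one
end exactly when every such subset is finite or cofinite. On a general `G`-set, a commensurated `M`
cuts only the finitely many orbits meeting its boundary, each of which is a coset space.

Transfixing passes to quotients and to products. If `G` transfixes `M` by `M₁`, then `h • M₁`
and `M₁` differ by a finite `G`-invariant set, so only on finite `G`-orbits; off those orbits `M₁`
is already `H`-invariant, and on them an `H`-invariant `P` close to `M₁` becomes `G`-invariant
by keeping only the `G`-orbits contained in `P`. -/

open Pointwise
open scoped symmDiff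

universe u

namespace SimpleGraph

variable {V : Type*} (Γ : SimpleGraph V)

def vertexBoundary (N : Set V) : Set V :=
  {v | ∃ w, Γ.Adj v w ∧ (v ∈ N ↔ w ∉ N)}

theorem vertexBoundary_compl (N : Set V) : Γ.vertexBoundary Nᶜ = Γ.vertexBoundary N := by
  ext v
  simp only [vertexBoundary, Set.mem_compl_iff, Set.mem_ofPred_eq, not_iff_not, iff_not_comm]

variable {Γ}

theorem ComponentCompl.supp_infinite_iff {K : Set V} (C : Γ.ComponentCompl K) :
    (ConnectedComponent.supp C).Infinite ↔ (C : Set V).Infinite := by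
  have : (C : Set V) = Subtype.val '' ConnectedComponent.supp C := by
    ext v
    simp [ComponentCompl.mem_supp_iff, ConnectedComponent.mem_supp_iff]
  rw [this, Set.infinite_image_iff Subtype.val_injective.injOn]

theorem one_lt_numEnds_of_ne {K : Finset V} {C₁ C₂ : Γ.ComponentCompl K} (hne : C₁ ≠ C₂)
    (h₁ : (C₁ : Set V).Infinite) (h₂ : (C₂ : Set V).Infinite) : 1 < numEnds Γ := by
  refine lt_of_lt_of_le ?_ (le_iSup _ K)
  exact Set.one_lt_encard_iff.mpr ⟨C₁, C₂, (C₁.supp_infinite_iff).mpr h₁,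
    (C₂.supp_infinite_iff).mpr h₂, hne⟩

theorem numEnds_le_one_of_finite_or_compl_finite (hΓ : ∀ v, (Γ.neighborSet v).Finite)
    (h : ∀ N : Set V, (Γ.vertexBoundary N).Finite → N.Finite ∨ Nᶜ.Finite) : numEnds Γ ≤ 1 := by
  refine iSup_le fun K => ?_
  by_contra! hK
  obtain ⟨C₁, C₂, hC₁, hC₂, hne⟩ := Set.one_lt_encard_iff.mp hK
  rw [Set.mem_ofPred_eq, ComponentCompl.supp_infinite_iff] at hC₁ hC₂
  have hbd : Γ.vertexBoundary C₁ ⊆ ↑K ∪ ⋃ k ∈ K, Γ.neighborSet k := by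
    rintro v ⟨w, hvw, hvw'⟩
    by_cases hv : v ∈ C₁
    · have hw : w ∈ K := by_contra fun hw => hvw'.mp hv (ComponentCompl.mem_of_adj v w hv hw hvw)
      exact Or.inr (Set.mem_biUnion hw hvw.symm)
    · by_contra hvK
      have hw : w ∈ C₁ := not_not.mp (mt hvw'.mpr hv)
      exact hv (ComponentCompl.mem_of_adj w v hw (fun h => hvK (Or.inl h)) hvw.symm)
  have hfin : (Γ.vertexBoundary C₁).Finite :=
    (K.finite_toSet.union (K.finite_toSet.biUnion fun k _ => hΓ k)).subset hbd
  rcases h _ hfin with h₁ | h₁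
  · exact hC₁ h₁
  · exact hC₂ (h₁.subset (ComponentCompl.pairwise_disjoint hne.symm).subset_compl_right)

theorem ComponentCompl.mem_iff_of_vertexBoundary_subset {N K : Set V}
    (hK : Γ.vertexBoundary N ⊆ K) {C : Γ.ComponentCompl K} {v w : V} (hv : v ∈ C) (hw : w ∈ C) :
    v ∈ N ↔ w ∈ N := by
  have hadj : ∀ ⦃a b : V⦄ (ha : a ∉ K) (_ : b ∉ K), Γ.Adj a b → (a ∈ N) = (b ∈ N) :=
    fun a b ha _ hab => propext (not_iff_not.mp (not_iff.mp fun h => ha (hK ⟨b, hab, h⟩)))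
  obtain ⟨_, rfl⟩ := hv
  obtain ⟨_, hw⟩ := hw
  exact (congrArg (ComponentCompl.lift (fun v _ => v ∈ N) hadj) hw).to_iff.symm

theorem exists_infinite_componentCompl_subset (hΓ : ∀ v, (Γ.neighborSet v).Finite)
    (hΓc : Γ.Preconnected) {N : Set V} {K : Finset V} (hK : Γ.vertexBoundary N ⊆ K)
    (hN : N.Infinite) :
    ∃ C : Γ.ComponentCompl K, (C : Set V).Infinite ∧ (C : Set V) ⊆ N := by
  let : LocallyFinite Γ := fun v => (hΓ v).fintype
  have : Fact Γ.Preconnected := ⟨hΓc⟩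
  have hcover : N \ K ⊆ ⋃ C : Γ.ComponentCompl K, (C : Set V) ∩ N := fun v hv =>
    Set.mem_iUnion.mpr ⟨Γ.componentComplMk hv.2, Γ.componentComplMk_mem hv.2, hv.1⟩
  obtain ⟨C, hC⟩ : ∃ C : Γ.ComponentCompl K, ((C : Set V) ∩ N).Infinite := by
    by_contra! h
    exact (hN.sdiff K.finite_toSet) ((Set.finite_iUnion h).subset hcover)
  obtain ⟨v, hvC, hvN⟩ := hC.nonempty
  exact ⟨C, hC.mono Set.inter_subset_left,
    fun w hw => (ComponentCompl.mem_iff_of_vertexBoundary_subset hK hvC hw).mp hvN⟩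

theorem finite_or_compl_finite_of_numEnds_le_one (hΓ : ∀ v, (Γ.neighborSet v).Finite)
    (hΓc : Γ.Preconnected) (hends : numEnds Γ ≤ 1) {N : Set V} (hN : (Γ.vertexBoundary N).Finite) :
    N.Finite ∨ Nᶜ.Finite := by
  by_contra! h
  have hK : Γ.vertexBoundary N ⊆ hN.toFinset := hN.coe_toFinset.superset
  have hKc : Γ.vertexBoundary Nᶜ ⊆ hN.toFinset := (vertexBoundary_compl Γ N).trans_subset hK
  obtain ⟨C₁, hC₁, hC₁N⟩ := exists_infinite_componentCompl_subset hΓ hΓc hK h.1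
  obtain ⟨C₂, hC₂, hC₂N⟩ := exists_infinite_componentCompl_subset hΓ hΓc hKc h.2
  have hne : C₁ ≠ C₂ := by
    rintro rfl
    obtain ⟨v, hv⟩ := hC₁.nonempty
    exact hC₂N hv (hC₁N hv)
  exact (one_lt_numEnds_of_ne hne hC₁ hC₂).not_ge hends

end SimpleGraph

section Commensurated

variable (G : Type*) {X Y : Type*} [Group G] [MulAction G X] [MulAction G Y]

def IsCommensurated (M : Set X) : Prop :=
  ∀ g : G, ((g • M) ∆ M).Finite

def IsTransfixed (M : Set X) : Prop :=
  ∃ M' : Set X, (∀ g : G, g • M' = M') ∧ (M ∆ M').Finite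

def TransfixesCommensurated : Prop :=
  ∀ (X : Type u) [MulAction G X] (M : Set X), IsCommensurated G M → IsTransfixed G M

variable {G}

theorem isCommensurated_of_closure_eq_top {S : Set G} (hS : Subgroup.closure S = ⊤)
    {M : Set X} (h : ∀ s ∈ S, ((s • M) ∆ M).Finite) : IsCommensurated G M := by
  let commensurator : Subgroup G :=
    { carrier := {g | ((g • M) ∆ M).Finite}
      one_mem' := by simp
      mul_mem' := fun {a b} ha hb => by
        refine ((hb.smul_set (a := a)).union ha).subset ?_
        rw [mul_smul, Set.smul_set_symmDiff]
        exact symmDiff_triangle _ _ _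
      inv_mem' := fun {a} ha => by
        have := ha.smul_set (a := a⁻¹)
        rwa [Set.smul_set_symmDiff, inv_smul_smul, symmDiff_comm] at this }
  intro g
  exact (Subgroup.closure_le commensurator).mpr h (hS.symm ▸ Subgroup.mem_top g)

theorem IsCommensurated.of_finite_symmDiff {M M' : Set X} (hM : IsCommensurated G M)
    (h : (M ∆ M').Finite) : IsCommensurated G M' := by
  intro g
  have h' : (M' ∆ M).Finite := symmDiff_comm M M' ▸ h
  refine ((h'.smul_set (a := g)).union ((hM g).union h)).subset ?_
  rw [Set.smul_set_symmDiff]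
  exact (symmDiff_triangle _ (g • M) _).trans
    (Set.union_subset_union_right _ (symmDiff_triangle _ M _))

theorem IsCommensurated.preimage {M : Set X} (hM : IsCommensurated G M) (f : Y →[G] X)
    (hf : Function.Injective f) : IsCommensurated G (f ⁻¹' M) := by
  intro g
  rw [← Group.preimage_smul_set, ← Set.preimage_symmDiff]
  exact (hM g).preimage hf.injOn

end Commensurated

section OrbitalGraph

variable {G X : Type*} [Group G] [MulAction G X] {S : Set G}

theorem schreierGraph_eq_orbitalGraph (S : Set G) (L : Subgroup G) :
    schreierGraph G S L = orbitalGraph G S (G ⧸ L) := by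
  ext x y
  refine and_congr_right fun _ => exists_congr fun s => and_congr_right fun _ => ⟨?_, ?_⟩
  · rintro ⟨g, ⟨rfl, rfl⟩ | ⟨rfl, rfl⟩⟩
    exacts [Or.inl rfl, Or.inr rfl]
  · rintro (rfl | rfl)
    · obtain ⟨g, rfl⟩ := QuotientGroup.mk_surjective x
      exact ⟨g, Or.inl ⟨rfl, rfl⟩⟩
    · obtain ⟨g, rfl⟩ := QuotientGroup.mk_surjective y
      exact ⟨g, Or.inr ⟨rfl, rfl⟩⟩

theorem orbitalGraph_neighborSet_finite (hS : S.Finite) (x : X) :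
    ((orbitalGraph G S X).neighborSet x).Finite := by
  refine (hS.biUnion fun s _ => (Set.finite_singleton (s⁻¹ • x)).insert (s • x)).subset ?_
  rintro y ⟨-, s, hs, rfl | rfl⟩
  · exact Set.mem_biUnion hs (Set.mem_insert _ _)
  · exact Set.mem_biUnion hs (by simp)

theorem orbitalGraph_reachable_smul (hS : Subgroup.closure S = ⊤) (g : G) (x : X) :
    (orbitalGraph G S X).Reachable (g • x) x := by
  induction (hS.symm ▸ Subgroup.mem_top g : g ∈ Subgroup.closure S) using
    Subgroup.closure_induction generalizing x with
  | mem s hs =>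
    by_cases h : s • x = x
    · rw [h]
    · exact SimpleGraph.Adj.reachable ⟨h, s, hs, Or.inr rfl⟩
  | one => rw [one_smul]
  | mul a b _ _ ha hb => rw [mul_smul]; exact (ha (b • x)).trans (hb x)
  | inv a _ ha => simpa using (ha (a⁻¹ • x)).symm

theorem orbitalGraph_preconnected [MulAction.IsPretransitive G X]
    (hS : Subgroup.closure S = ⊤) : (orbitalGraph G S X).Preconnected := fun x y => by
  obtain ⟨g, rfl⟩ := MulAction.exists_smul_eq G y x
  exact orbitalGraph_reachable_smul hS g y

theorem smul_symmDiff_subset_vertexBoundary {s : G} (hs : s ∈ S) (N : Set X) :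
    (s • N) ∆ N ⊆ (orbitalGraph G S X).vertexBoundary N := by
  intro x hx
  have key : x ∈ N ↔ s⁻¹ • x ∉ N := by
    rw [← Set.mem_smul_set_iff_inv_smul_mem]
    rw [Set.mem_symmDiff] at hx
    tauto
  refine ⟨s⁻¹ • x, ⟨fun h => ?_, s, hs, Or.inr (smul_inv_smul s x)⟩, key⟩
  rw [← h] at key
  exact iff_not_self key

theorem vertexBoundary_orbitalGraph_subset (N : Set X) :
    (orbitalGraph G S X).vertexBoundary N ⊆ ⋃ s ∈ S, ((s • N) ∆ N ∪ (s⁻¹ • N) ∆ N) := by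
  rintro x ⟨y, ⟨-, s, hs, rfl | rfl⟩, hxy⟩
  · refine Set.mem_biUnion hs (Or.inr ?_)
    rw [Set.mem_symmDiff, Set.mem_inv_smul_set_iff]
    tauto
  · refine Set.mem_biUnion hs (Or.inl ?_)
    rw [Set.mem_symmDiff, Set.smul_mem_smul_set_iff]
    tauto

end OrbitalGraph

section Orbits

variable {G X : Type*} [Group G] [MulAction G X]

theorem smul_set_eq_of_closure_eq_top {S : Set G} (hS : Subgroup.closure S = ⊤) {A : Set X}
    (h : ∀ s ∈ S, s • A = A) (g : G) : g • A = A :=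
  (Subgroup.closure_le (MulAction.stabilizer G A)).mpr h (hS.symm ▸ Subgroup.mem_top g)

theorem orbit_subset_of_smul_set_eq {A : Set X} (hA : ∀ g : G, g • A = A) {x : X} (hx : x ∈ A) :
    MulAction.orbit G x ⊆ A := by
  rintro _ ⟨g, rfl⟩
  exact hA g ▸ Set.smul_mem_smul_set hx

theorem orbit_subset_or_disjoint_of_smul_set_eq {A : Set X} (hA : ∀ g : G, g • A = A) (x : X) :
    MulAction.orbit G x ⊆ A ∨ Disjoint (MulAction.orbit G x) A := by
  by_cases hx : x ∈ A
  · exact Or.inl (orbit_subset_of_smul_set_eq hA hx)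
  · exact Or.inr (Set.disjoint_left.mpr fun y hy hyA =>
      hx (orbit_subset_of_smul_set_eq hA hyA (MulAction.mem_orbit_symm.mp hy)))

theorem orbit_subset_or_disjoint_of_disjoint_symmDiff {S : Set G} (hS : Subgroup.closure S = ⊤)
    {M : Set X} {x : X} (hx : ∀ s ∈ S, Disjoint (MulAction.orbit G x) ((s • M) ∆ M)) :
    MulAction.orbit G x ⊆ M ∨ Disjoint (MulAction.orbit G x) M := by
  have hA : ∀ s ∈ S, s • (M ∩ MulAction.orbit G x) = M ∩ MulAction.orbit G x := by
    intro s hs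
    rw [Set.smul_set_inter, MulAction.smul_orbit]
    ext y
    have : y ∈ MulAction.orbit G x → y ∉ (s • M) ∆ M := fun hy => Set.disjoint_left.mp (hx s hs) hy
    simp only [Set.mem_inter_iff, Set.mem_symmDiff] at this ⊢
    tauto
  rcases orbit_subset_or_disjoint_of_smul_set_eq (smul_set_eq_of_closure_eq_top hS hA) x with h | h
  · exact Or.inl (h.trans Set.inter_subset_left)
  · exact Or.inr (Set.disjoint_left.mpr fun y hy hyM => Set.disjoint_left.mp h hy ⟨hyM, hy⟩)

theorem smul_setOf_orbit (p : Set X → Prop) (g : G) :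
    g • {x | p (MulAction.orbit G x)} = {x | p (MulAction.orbit G x)} := by
  ext x
  simp only [Set.mem_smul_set_iff_inv_smul_mem, Set.mem_ofPred_eq, MulAction.orbit_smul]

end Orbits

section FW

variable {G : Type*} [Group G]

theorem exists_isSymmGen (hG : Group.FG G) : ∃ S : Finset G, IsSymmGen S := by
  classical
  obtain ⟨S, hS⟩ := hG.out
  refine ⟨S ∪ S⁻¹, fun s hs => ?_, eq_top_mono (Subgroup.closure_mono ?_) hS⟩
  · simpa [Finset.mem_inv', or_comm] using hs
  · exact Finset.coe_subset.mpr Finset.subset_union_left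

theorem HasFW.finite_or_compl_finite (hG : Group.FG G) (hFW : HasFW G) {L : Subgroup G}
    {N : Set (G ⧸ L)} (hN : IsCommensurated G N) : N.Finite ∨ Nᶜ.Finite := by
  obtain ⟨S, hS⟩ := exists_isSymmGen hG
  have hends := hFW S hS L
  rw [schreierGraph_eq_orbitalGraph] at hends
  refine SimpleGraph.finite_or_compl_finite_of_numEnds_le_one
    (orbitalGraph_neighborSet_finite S.finite_toSet) (orbitalGraph_preconnected hS.2) hends ?_
  exact (S.finite_toSet.biUnion fun s _ => (hN s).union (hN s⁻¹)).subset
    (vertexBoundary_orbitalGraph_subset N)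

theorem hasFW_of_finite_or_compl_finite
    (h : ∀ (L : Subgroup G) (N : Set (G ⧸ L)), IsCommensurated G N → N.Finite ∨ Nᶜ.Finite) :
    HasFW G := by
  intro S hS L
  rw [schreierGraph_eq_orbitalGraph]
  refine SimpleGraph.numEnds_le_one_of_finite_or_compl_finite
    (orbitalGraph_neighborSet_finite S.finite_toSet) fun N hN =>
    h L N (isCommensurated_of_closure_eq_top hS.2 fun s hs =>
      hN.subset (smul_symmDiff_subset_vertexBoundary hs N))

theorem HasFW.finite_or_finite_orbit (hG : Group.FG G) (hFW : HasFW G) {X : Type*}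
    [MulAction G X] {M : Set X} (hM : IsCommensurated G M) (x : X) :
    (MulAction.orbit G x ∩ M).Finite ∨ (MulAction.orbit G x \ M).Finite := by
  let f : G ⧸ MulAction.stabilizer G x →[G] X :=
    ⟨MulAction.ofQuotientStabilizer G x, MulAction.ofQuotientStabilizer_smul G x⟩
  have hf := MulAction.injective_ofQuotientStabilizer G x
  have hrange : Set.range f = MulAction.orbit G x := by
    ext y
    exact ⟨fun ⟨q, hq⟩ => hq ▸ MulAction.ofQuotientStabilizer_mem_orbit G x q,
      fun ⟨g, hg⟩ => ⟨g, hg⟩⟩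
  rw [← hrange, ← Set.image_preimage_eq_range_inter, Set.sdiff_eq,
    ← Set.image_preimage_eq_range_inter, Set.preimage_compl]
  exact (hFW.finite_or_compl_finite hG (hM.preimage f hf)).imp (·.image f) (·.image f)

end FW

section AlmostContainedOrbits

variable (G : Type*) {X : Type*} [Group G] [MulAction G X]

def almostContainedOrbits (M : Set X) : Set X :=
  {x | (MulAction.orbit G x \ M).Finite ∧ (MulAction.orbit G x ∩ M).Nonempty}

variable {G}

theorem mem_almostContainedOrbits_iff_of_subset_or_disjoint {M : Set X} {x : X}
    (hx : MulAction.orbit G x ⊆ M ∨ Disjoint (MulAction.orbit G x) M) :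
    x ∈ almostContainedOrbits G M ↔ x ∈ M := by
  rcases hx with hx | hx
  · simp only [almostContainedOrbits, Set.mem_ofPred_eq, Set.sdiff_eq_empty.mpr hx,
      Set.finite_empty, true_and, Set.inter_eq_left.mpr hx]
    exact iff_of_true ⟨x, MulAction.mem_orbit_self x⟩ (hx (MulAction.mem_orbit_self x))
  · simp only [almostContainedOrbits, Set.mem_ofPred_eq, hx.inter_eq, Set.not_nonempty_empty,
      and_false, false_iff]
    exact Set.disjoint_left.mp hx (MulAction.mem_orbit_self x)

theorem finite_symmDiff_almostContainedOrbits_inter_orbit {M : Set X} {x : X}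
    (hx : (MulAction.orbit G x ∩ M).Finite ∨ (MulAction.orbit G x \ M).Finite) :
    ((M ∆ almostContainedOrbits G M) ∩ MulAction.orbit G x).Finite := by
  have hmem : ∀ y ∈ MulAction.orbit G x, y ∈ almostContainedOrbits G M ↔
      (MulAction.orbit G x \ M).Finite ∧ (MulAction.orbit G x ∩ M).Nonempty := fun y hy => by
    rw [almostContainedOrbits, Set.mem_ofPred_eq, MulAction.orbit_eq_iff.mpr hy]
  by_cases h : (MulAction.orbit G x \ M).Finite ∧ (MulAction.orbit G x ∩ M).Nonempty
  · refine h.1.subset fun y ⟨hyM, hy⟩ => ⟨hy, fun hyM' => ?_⟩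
    rw [Set.mem_symmDiff, hmem y hy] at hyM
    tauto
  · have hfin : (MulAction.orbit G x ∩ M).Finite := by
      rcases hx with hx | hx
      · exact hx
      · rw [not_and, Set.not_nonempty_iff_eq_empty] at h
        exact (h hx).symm ▸ Set.finite_empty
    refine hfin.subset fun y ⟨hyM, hy⟩ => ⟨hy, ?_⟩
    rw [Set.mem_symmDiff, hmem y hy] at hyM
    tauto

end AlmostContainedOrbits

theorem TransfixesCommensurated.hasFW {G : Type u} [Group G]
    (h : TransfixesCommensurated.{u} G) : HasFW G := by
  refine hasFW_of_finite_or_compl_finite fun L N hN => ?_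
  obtain ⟨N', hN', hfin⟩ := h (G ⧸ L) N hN
  rcases orbit_subset_or_disjoint_of_smul_set_eq hN' ((1 : G) : G ⧸ L) with h' | h'
  · rw [MulAction.orbit_eq_univ, Set.univ_subset_iff] at h'
    rw [h', ← Set.top_eq_univ, symmDiff_top] at hfin
    exact Or.inr hfin
  · rw [MulAction.orbit_eq_univ, Set.univ_disjoint] at h'
    rw [h', ← Set.bot_eq_empty, symmDiff_bot] at hfin
    exact Or.inl hfin

theorem HasFW.transfixesCommensurated {G : Type*} [Group G] (hG : Group.FG G) (hFW : HasFW G) :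
    TransfixesCommensurated.{u} G := by
  intro X _ M hM
  obtain ⟨S, hS, hSfin⟩ := Group.fg_iff.mp hG
  set D := ⋃ s ∈ S, (s • M) ∆ M
  refine ⟨almostContainedOrbits G M,
    smul_setOf_orbit fun O => (O \ M).Finite ∧ (O ∩ M).Nonempty, ?_⟩
  -- outside the orbits meeting `D`, each orbit is contained in or disjoint from `M`
  have hcover : M ∆ almostContainedOrbits G M ⊆
      ⋃ d ∈ D, (M ∆ almostContainedOrbits G M) ∩ MulAction.orbit G d := by
    intro x hx
    obtain ⟨s, hs, hsx⟩ : ∃ s ∈ S, ¬Disjoint (MulAction.orbit G x) ((s • M) ∆ M) := by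
      by_contra! h
      rw [Set.mem_symmDiff, mem_almostContainedOrbits_iff_of_subset_or_disjoint
        (orbit_subset_or_disjoint_of_disjoint_symmDiff hS h)] at hx
      tauto
    obtain ⟨d, hdx, hdD⟩ := Set.not_disjoint_iff.mp hsx
    exact Set.mem_biUnion (Set.mem_biUnion hs hdD) ⟨hx, MulAction.mem_orbit_symm.mp hdx⟩
  exact ((hSfin.biUnion fun s _ => hM s).biUnion fun d _ =>
    finite_symmDiff_almostContainedOrbits_inter_orbit (hFW.finite_or_finite_orbit hG hM d)).subset
    hcover

section Product

variable {G H X : Type*} [Group G] [Group H] [MulAction G X] [MulAction H X]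

variable (G X) in
def unionFiniteOrbits : Set X :=
  {x | (MulAction.orbit G x).Finite}

theorem finite_symmDiff_sdiff_unionFiniteOrbits_union {M P : Set X} (hMG : ∀ g : G, g • M = M)
    (hMP : (M ∆ P).Finite) :
    (M ∆ (M \ unionFiniteOrbits G X ∪
      {x | MulAction.orbit G x ⊆ P} ∩ unionFiniteOrbits G X)).Finite := by
  set W := unionFiniteOrbits G X
  refine (((hMP.inter_of_left W).biUnion fun y hy => hy.2).union hMP).subset fun x hx => ?_
  by_cases hxW : x ∈ W
  · rcases Set.mem_symmDiff.mp hx with ⟨hxM, hxM'⟩ | ⟨hxM', hxM⟩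
    · obtain ⟨y, hyx, hyP⟩ := Set.not_subset.mp fun h => hxM' (Or.inr ⟨h, hxW⟩)
      have hyW : y ∈ W := show (MulAction.orbit G y).Finite from
        (MulAction.orbit_eq_iff.mpr hyx).symm ▸ hxW
      exact Or.inl (Set.mem_biUnion
        ⟨Or.inl ⟨orbit_subset_of_smul_set_eq hMG hxM hyx, hyP⟩, hyW⟩
        (MulAction.mem_orbit_symm.mp hyx))
    · rcases hxM' with ⟨hxM₂, -⟩ | ⟨hxI, -⟩
      · exact absurd hxM₂ hxM
      · exact Or.inr (Or.inr ⟨hxI (MulAction.mem_orbit_self x), hxM⟩)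
  · simp only [Set.mem_symmDiff, Set.mem_union, Set.mem_sdiff, Set.mem_inter_iff] at hx
    tauto

variable [SMulCommClass G H X]

theorem orbit_smul_of_smulCommClass (h : H) (x : X) :
    MulAction.orbit G (h • x) = h • MulAction.orbit G x := by
  ext y
  constructor
  · rintro ⟨g, rfl⟩
    exact ⟨g • x, ⟨g, rfl⟩, (smul_comm g h x).symm⟩
  · rintro ⟨_, ⟨g, rfl⟩, rfl⟩
    exact ⟨g, smul_comm g h x⟩

theorem smul_setOf_orbit_of_smulCommClass {p : Set X → Prop}
    (hp : ∀ (h : H) (A : Set X), p (h • A) ↔ p A) (h : H) :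
    h • {x | p (MulAction.orbit G x)} = {x | p (MulAction.orbit G x)} := by
  ext x
  simp only [Set.mem_smul_set_iff_inv_smul_mem, Set.mem_ofPred_eq,
    orbit_smul_of_smulCommClass, hp]

theorem smul_unionFiniteOrbits_of_smulCommClass (h : H) :
    h • unionFiniteOrbits G X = unionFiniteOrbits G X :=
  smul_setOf_orbit_of_smulCommClass (p := Set.Finite) (fun _ _ => Set.finite_smul_set) h

theorem smul_sdiff_unionFiniteOrbits {M : Set X} (hMG : ∀ g : G, g • M = M)
    (hMH : IsCommensurated H M) (h : H) :
    (h • M) \ unionFiniteOrbits G X = M \ unionFiniteOrbits G X := by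
  -- `h • M` and `M` differ by a finite `G`-invariant set, which consists of finite `G`-orbits
  have hsub : (h • M) ∆ M ⊆ unionFiniteOrbits G X := fun x hx =>
    (hMH h).subset (orbit_subset_of_smul_set_eq (fun g => by
      rw [Set.smul_set_symmDiff, smul_comm g h M, hMG]) hx)
  ext x
  have := @hsub x
  simp only [Set.mem_sdiff, Set.mem_symmDiff] at this ⊢
  tauto

theorem exists_smul_set_eq_of_finite_symmDiff {M P : Set X} (hMG : ∀ g : G, g • M = M)
    (hMH : IsCommensurated H M) (hP : ∀ h : H, h • P = P) (hMP : (M ∆ P).Finite) :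
    ∃ M' : Set X, (∀ g : G, g • M' = M') ∧ (∀ h : H, h • M' = M') ∧ (M ∆ M').Finite := by
  have hPH (h : H) : h • {x | MulAction.orbit G x ⊆ P} = {x | MulAction.orbit G x ⊆ P} :=
    smul_setOf_orbit_of_smulCommClass (p := (· ⊆ P)) (fun h A => by
      rw [Set.smul_set_subset_iff_subset_inv_smul_set, hP]) h
  refine ⟨M \ unionFiniteOrbits G X ∪ {x | MulAction.orbit G x ⊆ P} ∩ unionFiniteOrbits G X,
    fun g => ?_, fun h => ?_, finite_symmDiff_sdiff_unionFiniteOrbits_union hMG hMP⟩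
  · rw [Set.smul_set_union, Set.smul_set_sdiff, Set.smul_set_inter, hMG, unionFiniteOrbits,
      smul_setOf_orbit, smul_setOf_orbit (· ⊆ P)]
  · rw [Set.smul_set_union, Set.smul_set_sdiff, Set.smul_set_inter, hPH,
      smul_unionFiniteOrbits_of_smulCommClass, smul_sdiff_unionFiniteOrbits hMG hMH]

end Product

section TransfixesProd

variable {G H : Type*} [Group G] [Group H]

theorem TransfixesCommensurated.of_surjective {Γ : Type*} [Group Γ] (f : Γ →* G)
    (hf : Function.Surjective f) (h : TransfixesCommensurated.{u} Γ) :
    TransfixesCommensurated.{u} G := by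
  intro X _ M hM
  let : MulAction Γ X := MulAction.compHom X f
  obtain ⟨M', hM', hfin⟩ := h X M fun γ => hM (f γ)
  refine ⟨M', fun g => ?_, hfin⟩
  obtain ⟨γ, rfl⟩ := hf g
  exact hM' γ

theorem TransfixesCommensurated.prod (hG : TransfixesCommensurated.{u} G)
    (hH : TransfixesCommensurated.{u} H) : TransfixesCommensurated.{u} (G × H) := by
  intro X _ M hM
  let : MulAction G X := MulAction.compHom X (MonoidHom.inl G H)
  let : MulAction H X := MulAction.compHom X (MonoidHom.inr G H)
  have : SMulCommClass G H X := ⟨fun g h x => by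
    change (g, (1 : H)) • ((1 : G), h) • x = ((1 : G), h) • (g, (1 : H)) • x
    rw [smul_smul, smul_smul, Prod.mk_mul_mk, Prod.mk_mul_mk, mul_one, one_mul, mul_one, one_mul]⟩
  obtain ⟨M₁, hM₁, hMM₁⟩ := hG X M fun g => hM (g, 1)
  have hM₁comm : IsCommensurated (G × H) M₁ := hM.of_finite_symmDiff hMM₁
  obtain ⟨P, hP, hM₁P⟩ := hH X M₁ fun h => hM₁comm (1, h)
  obtain ⟨M', hM'G, hM'H, hM₁M'⟩ :=
    exists_smul_set_eq_of_finite_symmDiff hM₁ (fun h => hM₁comm (1, h)) hP hM₁P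
  refine ⟨M', fun p => ?_, (hMM₁.union hM₁M').subset (symmDiff_triangle _ _ _)⟩
  have hp : p = (p.1, 1) * (1, p.2) := by ext <;> simp
  rw [hp, mul_smul]
  exact (congrArg (p.1 • ·) (hM'H p.2)).trans (hM'G p.1)

end TransfixesProd

/-- For finitely generated groups, `G × H` has property FW iff both `G` and `H` do. -/
theorem stmt16 {G H : Type*} [Group G] [Group H] (hG : Group.FG G) (hH : Group.FG H) :
    HasFW (G × H) ↔ HasFW G ∧ HasFW H := by
  have hGH : Group.FG (G × H) := by
    have := hG; have := hH; infer_instance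
  constructor
  · intro h
    exact ⟨((h.transfixesCommensurated hGH).of_surjective (MonoidHom.fst G H)
        Prod.fst_surjective).hasFW,
      ((h.transfixesCommensurated hGH).of_surjective (MonoidHom.snd G H)
        Prod.snd_surjective).hasFW⟩
  · rintro ⟨hG', hH'⟩
    exact ((hG'.transfixesCommensurated hG).prod (hH'.transfixesCommensurated hH)).hasFW
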